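/- arXiv:1701.04372 — 7 statements merged into one kernel-verified Lean document; each statement's English description precedes it below -/
import Mathlib

section
/- Let G be a group, H a subgroup of G, and A ⊆ G a subset that generates G and contains a representative of every right coset of H in G (and contains the identity). Then the set A' = {σ₁σ₂σ₃⁻¹ : σ₁,σ₂,σ₃ ∈ A} ∩ H generates H. -/
/-! Pick a right transversal `R ⊆ A` of `H` with `1 ∈ R`. Mathlib's Schreier lemma
(`Subgroup.closure_mul_image_eq`) says that `H` is generated by the elements `r s t⁻¹` with
`r ∈ R`, `s ∈ A` and `t ∈ R` the representative of `H r s`; these lie in `A A A⁻¹ ∩ H`. -/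

namespace Subgroup

variable {G : Type*} [Group G]

lemma exists_isComplement_right_subset {H : Subgroup G} {A : Set G} {g : G} (hg : g ∈ A)
    (hA : ∀ x : G, ∃ a ∈ A, x * a⁻¹ ∈ H) : ∃ T ⊆ A, IsComplement H T ∧ g ∈ T := by
  classical
  choose rep hrepA hrepH using hA
  let t := Function.update (fun q : Quotient (QuotientGroup.rightRel H) ↦ rep q.out) ⟦g⟧ g
  have ht : ∀ q, Quotient.mk'' (t q) = q := fun q ↦ by
    by_cases hq : q = ⟦g⟧
    · subst hq
      simp [t]
    · rw [show t q = rep q.out from Function.update_of_ne hq _ _, ← q.out_eq']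
      exact Quotient.sound' (QuotientGroup.rightRel_apply.mpr (by simpa using hrepH q.out))
  refine ⟨Set.range t, ?_, isComplement_range_right ht, ⟦g⟧, Function.update_self _ _ _⟩
  rintro - ⟨q, rfl⟩
  by_cases hq : q = ⟦g⟧
  · simpa [t, hq] using hg
  · simpa [t, hq] using hrepA q.out

end Subgroup

/-- Schreier's lemma. -/
theorem schreier_lemma {G : Type*} [Group G] (H : Subgroup G) (A : Set G)
    (hone : (1 : G) ∈ A) (hgen : Subgroup.closure A = ⊤)
    (hrep : ∀ g : G, ∃ a ∈ A, g * a⁻¹ ∈ H) :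
    Subgroup.closure
      ({x : G | ∃ s₁ ∈ A, ∃ s₂ ∈ A, ∃ s₃ ∈ A, x = s₁ * s₂ * s₃⁻¹} ∩ (H : Set G)) = H := by
  obtain ⟨R, hRA, hR, hR1⟩ := Subgroup.exists_isComplement_right_subset hone hrep
  refine le_antisymm ((Subgroup.closure_le H).mpr Set.inter_subset_right) ?_
  refine (Subgroup.closure_mul_image_eq hR hR1 hgen).ge.trans (Subgroup.closure_mono ?_)
  rintro - ⟨-, ⟨r, hr, s, hs, rfl⟩, rfl⟩
  exact ⟨⟨r, hRA hr, s, hs, _, hRA (hR.toRightFun _).2, rfl⟩, hR.mul_inv_toRightFun_mem _⟩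
end

section
/- Let X = (Γ,c) be a uniprimitive classical coherent configuration. Then there is no subset B ⊆ Γ with |B| > |Γ|/2 such that the induced substructure X[B] is a clique (i.e., all off-diagonal pairs in B have the same color). -/
open Finset

private lemma aux_fst {α β : Type*} [Fintype α] [Fintype β] (P : α × β → Prop) [DecidablePred P] :
    (Finset.univ.filter P).card = ∑ a : α, (Finset.univ.filter fun b => P (a, b)).card := by
  rw [Finset.card_filter, Fintype.sum_prod_type]
  exact Finset.sum_congr rfl fun a _ => (Finset.card_filter _ _).symm

private lemma aux_snd {α β : Type*} [Fintype α] [Fintype β] (P : α × β → Prop) [DecidablePred P] :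
    (Finset.univ.filter P).card = ∑ b : β, (Finset.univ.filter fun a => P (a, b)).card := by
  rw [Finset.card_filter, Fintype.sum_prod_type_right]
  exact Finset.sum_congr rfl fun b _ => (Finset.card_filter _ _).symm

/-- In a uniprimitive classical coherent configuration, no subset `B` of more than half
the vertices induces a clique. -/
theorem no_large_clique_in_uniprimitive {Γ 𝒞 : Type*} [Fintype Γ] (c : Γ → Γ → 𝒞)
    (hsymm : ∃ σ : 𝒞 → 𝒞, ∀ x y : Γ, c y x = σ (c x y))
    (hdiag : ∀ x y x' y' : Γ, c x y = c x' y' → (x = y ↔ x' = y'))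
    (hcoh : ∃ γ : 𝒞 → 𝒞 → 𝒞 → ℕ, ∀ (i j : 𝒞) (x y : Γ),
      ({z : Γ | c x z = i ∧ c z y = j}).ncard = γ i j (c x y))
    (hhom : ∀ x y : Γ, c x x = c y y)
    (hprim : ∀ r : 𝒞, (∃ x y : Γ, x ≠ y ∧ c x y = r) →
      ∀ x y : Γ, Relation.ReflTransGen (fun a b => c a b = r ∨ c b a = r) x y)
    (hnontriv : ∃ x y x' y' : Γ, x ≠ y ∧ x' ≠ y' ∧ c x y ≠ c x' y') :
    ∀ B : Set Γ, Fintype.card Γ < 2 * B.ncard →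
      ¬ ∃ d : 𝒞, ∀ x ∈ B, ∀ y ∈ B, x ≠ y → c x y = d := by
  classical
  intro B hB hcl
  obtain ⟨d, hd⟩ := hcl
  obtain ⟨σ, hσ⟩ := hsymm
  obtain ⟨γ, hγ⟩ := hcoh
  set n := Fintype.card Γ with hndef
  set BF := B.toFinset with hBFdef
  have hBcard : BF.card = B.ncard := by
    rw [hBFdef, ← Set.ncard_eq_toFinset_card']
  have hB' : n < 2 * BF.card := by rw [hBcard]; exact hB
  have hdF : ∀ u ∈ BF, ∀ v ∈ BF, u ≠ v → c u v = d := by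
    intro u hu v hv huv
    exact hd u (Set.mem_toFinset.mp hu) v (Set.mem_toFinset.mp hv) huv
  have hγ' : ∀ (i j : 𝒞) (u v : Γ),
      (Finset.univ.filter fun z => c u z = i ∧ c z v = j).card = γ i j (c u v) := by
    intro i j u v
    rw [← hγ i j u v]
    rw [show {z : Γ | c u z = i ∧ c z v = j}
        = ((Finset.univ.filter fun z => c u z = i ∧ c z v = j : Finset Γ) : Set Γ) by
      ext z; simp]
    rw [Set.ncard_coe_finset]
  have hn2 : 1 < n := by
    obtain ⟨p, q, _, _, hpq, _, _⟩ := hnontriv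
    exact Fintype.one_lt_card_iff.mpr ⟨p, q, hpq⟩
  have hb2 : 1 < BF.card := by omega
  obtain ⟨x, hxBF, y, hyBF, hxy⟩ := Finset.one_lt_card.mp hb2
  have hcxy : c x y = d := hdF x hxBF y hyBF hxy
  have hσd : σ d = d := by
    have h1 := hσ x y
    rw [hcxy] at h1
    rw [← h1]
    exact hdF y hyBF x hxBF (Ne.symm hxy)
  have dsym : ∀ u v : Γ, c u v = d → c v u = d := by
    intro u v h
    rw [hσ u v, h, hσd]
  have dne : ∀ u v : Γ, c u v = d → u ≠ v := by
    intro u v h huv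
    exact hxy ((hdiag u v x y (by rw [h, hcxy])).mp huv)
  set k := γ d d (c x x) with hkdef
  have hk : ∀ z : Γ, (Finset.univ.filter fun u => c z u = d).card = k := by
    intro z
    have h1 : (Finset.univ.filter fun u => c z u = d)
        = (Finset.univ.filter fun u => c z u = d ∧ c u z = d) := by
      ext u
      simp only [Finset.mem_filter, Finset.mem_univ, true_and]
      exact ⟨fun h => ⟨h, dsym _ _ h⟩, fun h => h.1⟩
    rw [h1, hγ' d d z z, hhom z x]
  set K : 𝒞 → ℕ := fun i => γ i (σ i) (c x x) with hKdef
  have hK : ∀ (z : Γ) (i : 𝒞), (Finset.univ.filter fun u => c z u = i).card = K i := by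
    intro z i
    have h1 : (Finset.univ.filter fun u => c z u = i)
        = (Finset.univ.filter fun u => c z u = i ∧ c u z = σ i) := by
      ext u
      simp only [Finset.mem_filter, Finset.mem_univ, true_and]
      exact ⟨fun h => ⟨h, by rw [hσ z u, h]⟩, fun h => h.1⟩
    rw [h1, hγ' i (σ i) z z, hhom z x]
  set N : Γ → Finset Γ := fun z => Finset.univ.filter fun u => c z u = d with hNdef
  have hNmem : ∀ u z : Γ, u ∈ N z ↔ c z u = d := by
    intro u z
    simp [hNdef]
  have hNcard : ∀ z : Γ, (N z).card = k := hk
  have hxNx : x ∉ N x := by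
    rw [hNmem]
    intro h
    exact dne x x h rfl
  have hNxB : N x ∩ BF = BF.erase x := by
    ext u
    simp only [Finset.mem_inter, Finset.mem_erase]
    constructor
    · rintro ⟨h1, h2⟩
      exact ⟨(dne x u ((hNmem u x).mp h1)).symm, h2⟩
    · rintro ⟨h1, h2⟩
      exact ⟨(hNmem u x).mpr (hdF x hxBF u h2 (Ne.symm h1)), h2⟩
  set A := (N x \ BF).card with hAdef
  have hkA : A + (BF.erase x).card = k := by
    rw [← hNxB, ← hNcard x]
    exact Finset.card_sdiff_add_card_inter _ _
  have hbA : (BF.erase x).card + 1 = BF.card := Finset.card_erase_add_one hxBF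
  -- choose the off-diagonal color s ≠ d with maximal degree
  set OffD : Finset 𝒞 :=
    (Finset.univ.filter fun p : Γ × Γ => p.1 ≠ p.2).image fun p => c p.1 p.2 with hOffDdef
  have hOffDmem : ∀ r : 𝒞, r ∈ OffD ↔ ∃ u v : Γ, u ≠ v ∧ c u v = r := by
    intro r
    simp only [hOffDdef, Finset.mem_image, Finset.mem_filter, Finset.mem_univ, true_and]
    constructor
    · rintro ⟨⟨u, v⟩, h1, h2⟩; exact ⟨u, v, h1, h2⟩
    · rintro ⟨u, v, h1, h2⟩; exact ⟨⟨u, v⟩, h1, h2⟩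
  have hSoffne : ((OffD.filter fun r => r ≠ d)).Nonempty := by
    obtain ⟨p, q, p', q', hpq, hpq', hne⟩ := hnontriv
    by_cases h : c p q = d
    · refine ⟨c p' q', Finset.mem_filter.mpr ⟨(hOffDmem _).mpr ⟨p', q', hpq', rfl⟩, ?_⟩⟩
      intro hh
      exact hne (by rw [h, hh])
    · exact ⟨c p q, Finset.mem_filter.mpr ⟨(hOffDmem _).mpr ⟨p, q, hpq, rfl⟩, h⟩⟩
  obtain ⟨s, hsmem, hsmax⟩ := Finset.exists_max_image (OffD.filter fun r => r ≠ d) K hSoffne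
  have hsd : s ≠ d := (Finset.mem_filter.mp hsmem).2
  obtain ⟨u₀, w₀, hu0w0, hcu0⟩ := (hOffDmem s).mp (Finset.mem_filter.mp hsmem).1
  have hσswit : c w₀ u₀ = σ s := by rw [hσ u₀ w₀, hcu0]
  have hσsd : σ s ≠ d := by
    intro h
    apply hsd
    rw [← hcu0]
    apply dsym
    rw [hσswit, h]
  have hσsmem : σ s ∈ OffD.filter fun r => r ≠ d :=
    Finset.mem_filter.mpr ⟨(hOffDmem _).mpr ⟨w₀, u₀, Ne.symm hu0w0, hσswit⟩, hσsd⟩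
  have hKσs : K (σ s) ≤ K s := hsmax _ hσsmem
  have hsne : ∀ u v : Γ, c u v = s → u ≠ v := by
    intro u v h huv
    exact hu0w0 ((hdiag u v u₀ w₀ (by rw [h, hcu0])).mp huv)
  have hKs1 : 1 ≤ K s := by
    rw [← hK u₀ s]
    exact Finset.card_pos.mpr ⟨w₀, Finset.mem_filter.mpr ⟨Finset.mem_univ _, hcu0⟩⟩
  set m := γ d d s with hmdef
  set g := γ d s d with hgdef
  have hm : ∀ u v : Γ, c u v = s → (N u ∩ N v).card = m := by
    intro u v h
    have h1 : N u ∩ N v = Finset.univ.filter fun z => c u z = d ∧ c z v = d := by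
      ext z
      simp only [Finset.mem_inter, Finset.mem_filter, Finset.mem_univ, true_and, hNmem]
      exact ⟨fun hh => ⟨hh.1, dsym _ _ hh.2⟩, fun hh => ⟨hh.1, dsym _ _ hh.2⟩⟩
    rw [h1, hγ' d d u v, h]
  -- lower bound for m
  have hmlow : k + k + 2 ≤ n + m := by
    have hsub : N u₀ ∪ N w₀ ⊆ Finset.univ \ {u₀, w₀} := by
      intro z hz
      rw [Finset.mem_union] at hz
      rw [Finset.mem_sdiff]
      refine ⟨Finset.mem_univ _, ?_⟩
      simp only [Finset.mem_insert, Finset.mem_singleton]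
      push_neg
      constructor
      · rintro rfl
        rcases hz with h | h
        · exact dne _ _ ((hNmem _ _).mp h) rfl
        · have h' := (hNmem _ _).mp h
          rw [hσswit] at h'
          exact hσsd h'
      · rintro rfl
        rcases hz with h | h
        · have h' := (hNmem _ _).mp h
          rw [hcu0] at h'
          exact hsd h'
        · exact dne _ _ ((hNmem _ _).mp h) rfl
    have h2 := Finset.card_le_card hsub
    have h3 : (Finset.univ \ ({u₀, w₀} : Finset Γ)).card + ({u₀, w₀} : Finset Γ).card = n :=
      Finset.card_sdiff_add_card_eq_card (Finset.subset_univ _)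
    have h4 : ({u₀, w₀} : Finset Γ).card = 2 := Finset.card_pair hu0w0
    have h5 : (N u₀ ∪ N w₀).card + (N u₀ ∩ N w₀).card = (N u₀).card + (N w₀).card :=
      Finset.card_union_add_card_inter _ _
    have h6 := hm u₀ w₀ hcu0
    have h7 := hNcard u₀
    have h8 := hNcard w₀
    omega
  -- per-vertex identity: number of s-pairs inside N z is k * g
  have hSP : ∀ z : Γ, (Finset.univ.filter fun p : Γ × Γ =>
      c z p.1 = d ∧ c z p.2 = d ∧ c p.1 p.2 = s).card = k * g := by
    intro z
    rw [aux_snd]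
    have hzero : ∀ w ∈ Finset.univ, w ∉ N z →
        (Finset.univ.filter fun u => c z u = d ∧ c z w = d ∧ c u w = s).card = 0 := by
      intro w _ hw
      rw [Finset.card_eq_zero]
      refine Finset.filter_eq_empty_iff.mpr fun u _ hu => hw ((hNmem w z).mpr hu.2.1)
    calc (∑ w : Γ, (Finset.univ.filter fun u => c z u = d ∧ c z w = d ∧ c u w = s).card)
        = ∑ w ∈ N z, (Finset.univ.filter fun u => c z u = d ∧ c z w = d ∧ c u w = s).card :=
          (Finset.sum_subset (Finset.subset_univ _) hzero).symm
      _ = ∑ w ∈ N z, g := by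
          refine Finset.sum_congr rfl fun w hw => ?_
          have hzw : c z w = d := (hNmem w z).mp hw
          have h2 : (Finset.univ.filter fun u => c z u = d ∧ c z w = d ∧ c u w = s)
              = Finset.univ.filter fun u => c z u = d ∧ c u w = s := by
            ext u
            simp only [Finset.mem_filter, Finset.mem_univ, true_and]
            tauto
          rw [h2, hγ' d s z w, hzw]
      _ = k * g := by rw [Finset.sum_const, hNcard z, smul_eq_mul]
  -- count of s-pairs
  have hSpairs : (Finset.univ.filter fun p : Γ × Γ => c p.1 p.2 = s).card = n * K s := by
    rw [aux_fst]
    calc (∑ u : Γ, (Finset.univ.filter fun w => c u w = s).card)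
        = ∑ _u : Γ, K s := Finset.sum_congr rfl fun u _ => hK u s
      _ = n * K s := by rw [Finset.sum_const, Finset.card_univ, smul_eq_mul]
  -- triple count both ways
  have hTr1 : (Finset.univ.filter fun t : Γ × Γ × Γ =>
      c t.1 t.2.1 = d ∧ c t.1 t.2.2 = d ∧ c t.2.1 t.2.2 = s).card = n * (k * g) := by
    rw [aux_fst]
    calc (∑ z : Γ, (Finset.univ.filter fun p : Γ × Γ =>
            c z p.1 = d ∧ c z p.2 = d ∧ c p.1 p.2 = s).card)
        = ∑ _z : Γ, k * g := Finset.sum_congr rfl fun z _ => hSP z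
      _ = n * (k * g) := by rw [Finset.sum_const, Finset.card_univ, smul_eq_mul]
  have hTr2 : (Finset.univ.filter fun t : Γ × Γ × Γ =>
      c t.1 t.2.1 = d ∧ c t.1 t.2.2 = d ∧ c t.2.1 t.2.2 = s).card = (n * K s) * m := by
    rw [aux_snd]
    have h1 : ∀ p : Γ × Γ,
        (Finset.univ.filter fun z => c z p.1 = d ∧ c z p.2 = d ∧ c p.1 p.2 = s).card
        = if c p.1 p.2 = s then m else 0 := by
      intro p
      by_cases h : c p.1 p.2 = s
      · rw [if_pos h]
        have h2 : (Finset.univ.filter fun z => c z p.1 = d ∧ c z p.2 = d ∧ c p.1 p.2 = s)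
            = N p.1 ∩ N p.2 := by
          ext z
          simp only [Finset.mem_filter, Finset.mem_univ, true_and, Finset.mem_inter, hNmem]
          exact ⟨fun hh => ⟨dsym _ _ hh.1, dsym _ _ hh.2.1⟩,
            fun hh => ⟨dsym _ _ hh.1, dsym _ _ hh.2, h⟩⟩
        rw [h2]
        exact hm p.1 p.2 h
      · rw [if_neg h, Finset.card_eq_zero]
        exact Finset.filter_eq_empty_iff.mpr fun z _ hz => h hz.2.2
    calc (∑ p : Γ × Γ,
          (Finset.univ.filter fun z => c z p.1 = d ∧ c z p.2 = d ∧ c p.1 p.2 = s).card)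
        = ∑ p : Γ × Γ, if c p.1 p.2 = s then m else 0 := Finset.sum_congr rfl fun p _ => h1 p
      _ = ∑ _p ∈ Finset.univ.filter fun p : Γ × Γ => c p.1 p.2 = s, m := by
          rw [Finset.sum_filter]
      _ = (n * K s) * m := by rw [Finset.sum_const, hSpairs, smul_eq_mul]
  have hcancel : k * g = K s * m := by
    have h1 : n * (k * g) = n * (K s * m) := by rw [← hTr1, hTr2]; ring
    exact Nat.eq_of_mul_eq_mul_left (by omega) h1
  -- upper bound at x
  have hup : k * g ≤ A * K s + A * K (σ s) := by
    have h0 : k * g = (Finset.univ.filter fun p : Γ × Γ =>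
        c x p.1 = d ∧ c x p.2 = d ∧ c p.1 p.2 = s).card := (hSP x).symm
    have hsub : (Finset.univ.filter fun p : Γ × Γ =>
        c x p.1 = d ∧ c x p.2 = d ∧ c p.1 p.2 = s)
        ⊆ (Finset.univ.filter fun p : Γ × Γ => (p.1 ∈ N x \ BF) ∧ c p.1 p.2 = s)
          ∪ (Finset.univ.filter fun p : Γ × Γ => (p.2 ∈ N x \ BF) ∧ c p.1 p.2 = s) := by
      intro p hp
      simp only [Finset.mem_filter, Finset.mem_univ, true_and] at hp
      obtain ⟨h1, h2, h3⟩ := hp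
      rw [Finset.mem_union]
      by_cases hp1 : p.1 ∈ BF
      · right
        refine Finset.mem_filter.mpr ⟨Finset.mem_univ _, ⟨?_, h3⟩⟩
        rw [Finset.mem_sdiff]
        refine ⟨(hNmem _ _).mpr h2, fun hp2 => ?_⟩
        exact hsd (h3.symm.trans (hdF p.1 hp1 p.2 hp2 (hsne _ _ h3)))
      · left
        exact Finset.mem_filter.mpr ⟨Finset.mem_univ _,
          ⟨Finset.mem_sdiff.mpr ⟨(hNmem _ _).mpr h1, hp1⟩, h3⟩⟩
    have hS1 : (Finset.univ.filter fun p : Γ × Γ =>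
        (p.1 ∈ N x \ BF) ∧ c p.1 p.2 = s).card = A * K s := by
      rw [aux_fst]
      have hzero : ∀ u ∈ Finset.univ, u ∉ N x \ BF →
          (Finset.univ.filter fun w => (u ∈ N x \ BF) ∧ c u w = s).card = 0 := by
        intro u _ hu
        rw [Finset.card_eq_zero]
        exact Finset.filter_eq_empty_iff.mpr fun w _ hw => hu hw.1
      calc (∑ u : Γ, (Finset.univ.filter fun w => (u ∈ N x \ BF) ∧ c u w = s).card)
          = ∑ u ∈ N x \ BF, (Finset.univ.filter fun w => (u ∈ N x \ BF) ∧ c u w = s).card :=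
            (Finset.sum_subset (Finset.subset_univ _) hzero).symm
        _ = ∑ u ∈ N x \ BF, K s := by
            refine Finset.sum_congr rfl fun u hu => ?_
            have h2 : (Finset.univ.filter fun w => (u ∈ N x \ BF) ∧ c u w = s)
                = Finset.univ.filter fun w => c u w = s := by
              ext w
              simp only [Finset.mem_filter, Finset.mem_univ, true_and]
              exact ⟨fun hh => hh.2, fun hh => ⟨hu, hh⟩⟩
            rw [h2]
            exact hK u s
        _ = A * K s := by rw [Finset.sum_const, smul_eq_mul]
    have hS2 : (Finset.univ.filter fun p : Γ × Γ =>
        (p.2 ∈ N x \ BF) ∧ c p.1 p.2 = s).card ≤ A * K (σ s) := by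
      rw [aux_snd]
      have hzero : ∀ w ∈ Finset.univ, w ∉ N x \ BF →
          (Finset.univ.filter fun u => (w ∈ N x \ BF) ∧ c u w = s).card = 0 := by
        intro w _ hw
        rw [Finset.card_eq_zero]
        exact Finset.filter_eq_empty_iff.mpr fun u _ hu => hw hu.1
      calc (∑ w : Γ, (Finset.univ.filter fun u => (w ∈ N x \ BF) ∧ c u w = s).card)
          = ∑ w ∈ N x \ BF, (Finset.univ.filter fun u => (w ∈ N x \ BF) ∧ c u w = s).card :=
            (Finset.sum_subset (Finset.subset_univ _) hzero).symm
        _ ≤ ∑ _w ∈ N x \ BF, K (σ s) := by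
            refine Finset.sum_le_sum fun w hw => ?_
            have hsubf : (Finset.univ.filter fun u => (w ∈ N x \ BF) ∧ c u w = s)
                ⊆ Finset.univ.filter fun u => c w u = σ s := by
              intro u hu
              simp only [Finset.mem_filter, Finset.mem_univ, true_and] at hu ⊢
              rw [hσ u w, hu.2]
            calc (Finset.univ.filter fun u => (w ∈ N x \ BF) ∧ c u w = s).card
                ≤ (Finset.univ.filter fun u => c w u = σ s).card := Finset.card_le_card hsubf
              _ = K (σ s) := hK w (σ s)
        _ = A * K (σ s) := by rw [Finset.sum_const, smul_eq_mul]
    calc k * g = _ := h0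
      _ ≤ ((Finset.univ.filter fun p : Γ × Γ => (p.1 ∈ N x \ BF) ∧ c p.1 p.2 = s)
          ∪ (Finset.univ.filter fun p : Γ × Γ => (p.2 ∈ N x \ BF) ∧ c p.1 p.2 = s)).card :=
            Finset.card_le_card hsub
      _ ≤ (Finset.univ.filter fun p : Γ × Γ => (p.1 ∈ N x \ BF) ∧ c p.1 p.2 = s).card
          + (Finset.univ.filter fun p : Γ × Γ => (p.2 ∈ N x \ BF) ∧ c p.1 p.2 = s).card :=
            Finset.card_union_le _ _
      _ ≤ A * K s + A * K (σ s) := by omega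
  -- final contradiction
  have hge : 2 * A + 1 ≤ m := by omega
  have h1 : K s * (2 * A + 1) ≤ K s * m := Nat.mul_le_mul_left _ hge
  have h2 : A * K (σ s) ≤ A * K s := Nat.mul_le_mul_left _ hKσs
  have h3 : K s * (2 * A + 1) = 2 * (A * K s) + K s := by ring
  linarith [hcancel, hup]
end

section
/- (Fisher's inequality, including degenerate designs): Let (V,𝒜) be a u-uniform regular hypergraph with v = |V| vertices and b = |𝒜| edges, u < v, such that every pair of distinct vertices lies in exactly λ edges for some fixed λ ≥ 0 (regularity assumed if λ = 0). Then b ≥ v. -/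
/-!
The incidence vectors of the vertices, in `ℝ^𝒜`, have Gram matrix `(r - λ) I + λ J`. A block
through a vertex `x` has only `u < v` points, so it misses some `y`, whence `λ < r`. Then this
matrix is positive definite, and the `v` incidence vectors are linearly independent in a space
of dimension `b`.
-/

open Finset
open scoped InnerProductSpace

theorem Multiset.sum_coe_boole {α R : Type*} [DecidableEq α] [AddCommMonoidWithOne R]
    (s : Multiset α) (p : α → Prop) [DecidablePred p] :
    ∑ a : s, (if p a then (1 : R) else 0) = s.countP p := by
  conv_rhs => rw [← Multiset.map_univ_coe s, countP_map]
  rw [sum_boole]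
  rfl

theorem Multiset.countP_and_lt_countP {α : Type*} {s : Multiset α} {p q : α → Prop}
    [DecidablePred p] [DecidablePred q] {a : α} (ha : a ∈ s) (hp : p a) (hq : ¬q a) :
    s.countP (fun b => p b ∧ q b) < s.countP p := by
  rw [countP_eq_countP_filter_add s p q, countP_filter, Nat.lt_add_right_iff_pos]
  exact countP_pos_of_mem (mem_filter.mpr ⟨ha, hq⟩) hp

theorem linearIndependent_of_inner_eq {ι E : Type*} [NormedAddCommGroup E]
    [InnerProductSpace ℝ E] (f : ι → E) {r lam : ℝ} (hlam : 0 ≤ lam) (hlt : lam < r)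
    (hdiag : ∀ i, ⟪f i, f i⟫_ℝ = r) (hoff : ∀ i j, i ≠ j → ⟪f i, f j⟫_ℝ = lam) :
    LinearIndependent ℝ f := by
  classical
  rw [linearIndependent_iff']
  intro s g hg i hi
  have hgram : ∀ j k, ⟪f j, f k⟫_ℝ = (r - lam) * (if j = k then 1 else 0) + lam := by
    intro j k
    split_ifs with h
    · subst h; rw [hdiag]; ring
    · rw [hoff j k h]; ring
  have hnorm : ⟪∑ j ∈ s, g j • f j, ∑ k ∈ s, g k • f k⟫_ℝ
      = (r - lam) * ∑ j ∈ s, g j ^ 2 + lam * (∑ j ∈ s, g j) ^ 2 := by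
    simp only [sum_inner, inner_sum, real_inner_smul_left, real_inner_smul_right, hgram]
    simp only [mul_add, mul_ite, mul_one, mul_zero, sum_add_distrib, sum_ite_eq',
      sum_ite_mem, inter_self]
    rw [sq (∑ j ∈ s, g j), sum_mul_sum]
    simp only [mul_sum]
    congr 1
    · exact sum_congr rfl fun j _ => by ring
    · exact sum_congr rfl fun j _ => sum_congr rfl fun k _ => by ring
  rw [hg, inner_zero_left] at hnorm
  have hsq : (r - lam) * g i ^ 2 ≤ 0 := calc
    (r - lam) * g i ^ 2 ≤ (r - lam) * ∑ j ∈ s, g j ^ 2 :=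
      mul_le_mul_of_nonneg_left (single_le_sum (fun j _ => sq_nonneg (g j)) hi) (by linarith)
    _ ≤ 0 := by nlinarith [sq_nonneg (∑ j ∈ s, g j)]
  have hgi : g i ^ 2 ≤ 0 := nonpos_of_mul_nonpos_right hsq (by linarith)
  exact pow_eq_zero_iff two_ne_zero |>.mp (le_antisymm hgi (sq_nonneg _))

section Incidence

variable {V : Type*} [DecidableEq V]

noncomputable def incidenceVector (𝒜 : Multiset (Finset V)) (x : V) : EuclideanSpace ℝ 𝒜 :=
  WithLp.toLp 2 fun A => if x ∈ (A : Finset V) then 1 else 0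

theorem inner_incidenceVector (𝒜 : Multiset (Finset V)) (x y : V) :
    ⟪incidenceVector 𝒜 x, incidenceVector 𝒜 y⟫_ℝ = 𝒜.countP (fun A => x ∈ A ∧ y ∈ A) := by
  rw [EuclideanSpace.inner_eq_star_dotProduct, ← Multiset.sum_coe_boole]
  simp only [incidenceVector, dotProduct, star_trivial, mul_ite, mul_one, mul_zero, ite_and]

end Incidence

/-- Fisher's inequality (including degenerate designs): a `u`-uniform regular hypergraph
on `v` vertices, `u < v`, in which every pair of distinct vertices lies in exactly `λ`
edges, has at least `v` edges. -/
theorem fisher_inequality {V : Type*} [Fintype V] [DecidableEq V]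
    (𝒜 : Multiset (Finset V)) (u r lam : ℕ)
    (huniform : ∀ A ∈ 𝒜, A.card = u) (hincomplete : u < Fintype.card V)
    (hr : 1 ≤ r) (hreg : ∀ x : V, 𝒜.countP (fun A => x ∈ A) = r)
    (hpair : ∀ x y : V, x ≠ y → 𝒜.countP (fun A => x ∈ A ∧ y ∈ A) = lam) :
    Fintype.card V ≤ Multiset.card 𝒜 := by
  obtain ⟨x⟩ : Nonempty V := Fintype.card_pos_iff.mp (by omega)
  have hlam : lam < r := by
    obtain ⟨A, hA, hxA⟩ := Multiset.countP_pos.mp (hreg x ▸ hr)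
    obtain ⟨y, -, hyA⟩ := exists_mem_notMem_of_card_lt_card (s := A) (t := univ)
      (by rw [huniform A hA, card_univ]; exact hincomplete)
    have hxy : x ≠ y := by rintro rfl; exact hyA hxA
    rw [← hreg x, ← hpair x y hxy]
    exact Multiset.countP_and_lt_countP hA hxA hyA
  have hli : LinearIndependent ℝ (incidenceVector 𝒜) := by
    refine linearIndependent_of_inner_eq _ (Nat.cast_nonneg lam) (Nat.cast_lt.mpr hlam)
      (fun x => ?_) (fun x y hxy => ?_)
    · rw [inner_incidenceVector, ← hreg x]; simp
    · rw [inner_incidenceVector, hpair x y hxy]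
  simpa [finrank_euclideanSpace] using hli.fintype_card_le_finrank
end

section
/- Let (V₁,V₂;A) be a semiregular nontrivial bipartite graph (neither empty nor complete). Then no twin class in V₁ has more than |V₁|/2 elements. -/
/-- In a semiregular nontrivial bipartite graph, no twin class in `V₁` has more than
`|V₁|/2` elements. -/
theorem twin_class_small_of_semiregular {V₁ V₂ : Type*} [Fintype V₁] [Fintype V₂]
    (E : V₁ → V₂ → Prop)
    (hsemi₁ : ∃ d₁ : ℕ, ∀ v : V₁, ({w : V₂ | E v w}).ncard = d₁)
    (hsemi₂ : ∃ d₂ : ℕ, ∀ w : V₂, ({v : V₁ | E v w}).ncard = d₂)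
    (hnonempty : ∃ v w, E v w) (hnoncomplete : ∃ v w, ¬ E v w) :
    ∀ v : V₁, 2 * ({v' : V₁ | ∀ w, E v' w ↔ E v w}).ncard ≤ Fintype.card V₁ := by
  classical
  obtain ⟨d₁, h₁⟩ := hsemi₁
  obtain ⟨d₂, h₂⟩ := hsemi₂
  obtain ⟨v₀, w₀, hvw⟩ := hnonempty
  obtain ⟨v₁, w₁, hnvw⟩ := hnoncomplete
  intro v
  -- v has a neighbor
  have hne : ({w : V₂ | E v w}).Nonempty := by
    rw [← Set.ncard_pos (Set.toFinite _), h₁ v, ← h₁ v₀]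
    exact (Set.ncard_pos (Set.toFinite _)).mpr ⟨w₀, hvw⟩
  obtain ⟨w, hw⟩ := hne
  -- v has a non-neighbor
  have hnn : ∃ w', ¬ E v w' := by
    by_contra h
    push_neg at h
    have huniv : {w : V₂ | E v w} = Set.univ := Set.eq_univ_of_forall h
    have : ({w : V₂ | E v₁ w}) = Set.univ := by
      apply Set.eq_of_subset_of_ncard_le (Set.subset_univ _) _ (Set.toFinite _)
      rw [h₁ v₁, ← h₁ v, huniv]
    exact hnvw (this.symm ▸ Set.mem_univ w₁ : w₁ ∈ {w : V₂ | E v₁ w})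
  obtain ⟨w', hw'⟩ := hnn
  set T := {v' : V₁ | ∀ u, E v' u ↔ E v u} with hT
  have hsub1 : T ⊆ {v' : V₁ | E v' w} := fun x hx => (hx w).mpr hw
  have hsub2 : T ⊆ {v' : V₁ | E v' w'}ᶜ := fun x hx hmem => hw' ((hx w').mp hmem)
  have c1 : T.ncard ≤ ({v' : V₁ | E v' w}).ncard :=
    Set.ncard_le_ncard hsub1 (Set.toFinite _)
  have c2 : T.ncard ≤ ({v' : V₁ | E v' w'}ᶜ).ncard :=
    Set.ncard_le_ncard hsub2 (Set.toFinite _)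
  have key : ({v' : V₁ | E v' w}).ncard + ({v' : V₁ | E v' w'}ᶜ).ncard = Fintype.card V₁ := by
    rw [h₂ w, ← h₂ w', Set.ncard_add_ncard_compl, Nat.card_eq_fintype_card]
  omega
end

section
/- (Large clique lemma): Let X = (Γ,c) be a classical coherent configuration, and let C ⊆ Γ be a vertex-color class with |C| > |Γ|/2. If the induced substructure X[C] is a clique, then C is a class of twins, i.e., every transposition of two elements of C is an automorphism of X. -/
/-- Large clique lemma: in a classical coherent configuration, if a vertex-color class
`C` with `|C| > |Γ|/2` induces a clique, then `C` is a class of twins: every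
transposition of two elements of `C` preserves the coloring. -/
theorem large_clique_lemma {Γ 𝒞 : Type*} [Fintype Γ] [DecidableEq Γ] (c : Γ → Γ → 𝒞)
    (hsymm : ∃ σ : 𝒞 → 𝒞, ∀ x y : Γ, c y x = σ (c x y))
    (hdiag : ∀ x y x' y' : Γ, c x y = c x' y' → (x = y ↔ x' = y'))
    (hcoh : ∃ γ : 𝒞 → 𝒞 → 𝒞 → ℕ, ∀ (i j : 𝒞) (x y : Γ),
      ({z : Γ | c x z = i ∧ c z y = j}).ncard = γ i j (c x y))
    (d₀ : 𝒞) (C : Set Γ) (hC : C = {x : Γ | c x x = d₀})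
    (hlarge : Fintype.card Γ < 2 * C.ncard)
    (hclique : ∃ e : 𝒞, ∀ x ∈ C, ∀ y ∈ C, x ≠ y → c x y = e) :
    ∀ γ₁ ∈ C, ∀ γ₂ ∈ C, ∀ x y : Γ,
      c (Equiv.swap γ₁ γ₂ x) (Equiv.swap γ₁ γ₂ y) = c x y := by
  classical
  -- pure integer arithmetic: variance form of Fisher's inequality
  have arith : ∀ A D Q S' T E1 E2 : ℤ, 1 ≤ A → 1 ≤ D → 0 ≤ Q → A + 1 ≤ S' → T + 1 ≤ S' →
      S' * D = T * A → (S' - 1) * Q = D * (A - 1) → E1 + A = A * D →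
      E2 + A * A = A * (D + (A - 1) * Q) → E1 ^ 2 ≤ (T - 1) * E2 → False := by
    intro A D Q S' T E1 E2 hA hD hQ hAS hTS g1 g2 g3 g4 g5
    have hDA : D + 1 ≤ A := by
      by_contra hcon
      push_neg at hcon
      have h1 : A ≤ D := by linarith
      have h2 : S' * A ≤ S' * D := mul_le_mul_of_nonneg_left h1 (by linarith)
      have h3 : T * A ≤ (S' - 1) * A :=
        mul_le_mul_of_nonneg_right (by linarith) (by linarith)
      linarith [g1]
    have e1 : E1 = A * D - A := by linarith
    have h7 : A * E1 ^ 2 ≤ (S' * D - A) * E2 := by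
      have h71 : A * E1 ^ 2 ≤ A * ((T - 1) * E2) :=
        mul_le_mul_of_nonneg_left g5 (by linarith)
      have h72 : A * ((T - 1) * E2) = (S' * D - A) * E2 := by
        linear_combination (-E2) * g1
      linarith
    have h8 : (S' - 1) * (A * E1 ^ 2) ≤ (S' - 1) * ((S' * D - A) * E2) :=
      mul_le_mul_of_nonneg_left h7 (by linarith)
    have e2 : E2 = A * D + A * (A - 1) * Q - A * A := by linarith
    have hE2' : (S' - 1) * E2 = (S' - 1) * (A * D - A * A) + A * D * (A - 1) ^ 2 := by
      linear_combination (S' - 1) * e2 + A * (A - 1) * g2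
    have hfin : A ^ 3 * (S' - 1) * (D - 1) ^ 2
        ≤ (S' * D - A) * ((S' - 1) * (A * D - A * A) + A * D * (A - 1) ^ 2) := by
      have hl : A ^ 3 * (S' - 1) * (D - 1) ^ 2 = (S' - 1) * (A * E1 ^ 2) := by
        rw [e1]; ring
      have hr : (S' - 1) * ((S' * D - A) * E2) = (S' * D - A) * ((S' - 1) * E2) := by ring
      rw [hl, ← hE2', ← hr]
      exact h8
    have key : A ^ 3 * (S' - 1) * (D - 1) ^ 2
        - (S' * D - A) * ((S' - 1) * (A * D - A * A) + A * D * (A - 1) ^ 2)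
        = A * D * (A - D) * (S' - A) ^ 2 := by ring
    have hpos : 0 < A * D * (A - D) * (S' - A) ^ 2 := by
      have h1 : 0 < A * D := mul_pos (by linarith) (by linarith)
      have h2 : 0 < A - D := by linarith
      have h3 : 0 < (S' - A) ^ 2 := pow_pos (by linarith) 2
      exact mul_pos (mul_pos h1 h2) h3
    linarith
  obtain ⟨σ, hσ⟩ := hsymm
  obtain ⟨p, hp⟩ := hcoh
  obtain ⟨e, he⟩ := hclique
  -- endpoint color determination
  have hstart : ∀ x y x' y' : Γ, c x y = c x' y' → c x x = c x' x' := by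
    intro x y x' y' h
    have h1 := hp (c x x) (c x y) x y
    have h2 := hp (c x x) (c x y) x' y'
    rw [← h] at h2
    have hpos : 0 < ({z : Γ | c x' z = c x x ∧ c z y' = c x y}).ncard := by
      rw [h2, ← h1]
      exact (Set.ncard_pos (Set.toFinite _)).2 ⟨x, rfl, rfl⟩
    obtain ⟨w, hw1, hw2⟩ := (Set.ncard_pos (Set.toFinite _)).1 hpos
    have ew : x' = w := (hdiag x x x' w hw1.symm).mp rfl
    subst ew; exact hw1.symm
  have hend : ∀ x y x' y' : Γ, c x y = c x' y' → c y y = c y' y' := by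
    intro x y x' y' h
    have h1 := hp (c x y) (c y y) x y
    have h2 := hp (c x y) (c y y) x' y'
    rw [← h] at h2
    have hpos : 0 < ({z : Γ | c x' z = c x y ∧ c z y' = c y y}).ncard := by
      rw [h2, ← h1]
      exact (Set.ncard_pos (Set.toFinite _)).2 ⟨y, rfl, rfl⟩
    obtain ⟨w, hw1, hw2⟩ := (Set.ncard_pos (Set.toFinite _)).1 hpos
    have ew : w = y' := (hdiag y y w y' hw2.symm).mp rfl
    subst ew; exact hw2.symm
  have hσσ : ∀ x y : Γ, σ (σ (c x y)) = c x y := by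
    intro x y; rw [← hσ x y, ← hσ y x]
  have hmem : ∀ w : Γ, w ∈ C ↔ c w w = d₀ := by
    intro w; rw [hC]; exact Iff.rfl
  intro γ₁ hγ₁ γ₂ hγ₂
  by_cases h12 : γ₁ = γ₂
  · intro x y; subst h12; simp
  intro x y
  have hγ₁₁ : c γ₁ γ₁ = d₀ := (hmem γ₁).1 hγ₁
  have hγ₂₂ : c γ₂ γ₂ = d₀ := (hmem γ₂).1 hγ₂
  have hee : c γ₁ γ₂ = e := he γ₁ hγ₁ γ₂ hγ₂ h12
  have he_ne : ∀ a b : Γ, c a b = e → a ≠ b := fun a b h hab =>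
    h12 ((hdiag a b γ₁ γ₂ (h.trans hee.symm)).mp hab)
  -- Main lemma: outside vertices see all of C in one color
  have M : ∀ u v z : Γ, u ∈ C → v ∈ C → z ∉ C → c u z = c v z := by
    intro u v z huC hvC hzC
    by_contra hne
    have huv : u ≠ v := by rintro rfl; exact hne rfl
    set i := c u z with hi
    have hi_src : ∀ a b : Γ, c a b = i → a ∈ C := fun a b h =>
      (hmem a).2 ((hstart a b u z h).trans ((hmem u).1 huC))
    have hi_tgt : ∀ a b : Γ, c a b = i → b ∉ C := fun a b h hb => by
      have : c b b = c z z := hend a b u z h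
      exact hzC ((hmem z).2 (this ▸ (hmem b).1 hb))
    have hσσi : σ (σ i) = i := hσσ u z
    -- finite set machinery
    set CF : Finset Γ := Finset.univ.filter (fun w : Γ => c w w = d₀) with hCF
    set B : Γ → Finset Γ := fun yy => Finset.univ.filter (fun w : Γ => c w yy = i) with hB
    set Dg : Γ → Finset Γ := fun w => Finset.univ.filter (fun yy : Γ => c w yy = i) with hDg
    set S : Finset Γ := Finset.univ.filter (fun yy : Γ => (B yy).Nonempty) with hS
    have hCFmem : ∀ w : Γ, w ∈ CF ↔ w ∈ C := by
      intro w; rw [hCF, hmem]; simp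
    have hBmem : ∀ w yy : Γ, w ∈ B yy ↔ c w yy = i := by
      intro w yy; rw [hB]; simp
    have hDgmem : ∀ w yy : Γ, yy ∈ Dg w ↔ c w yy = i := by
      intro w yy; rw [hDg]; simp
    have hSmem : ∀ yy : Γ, yy ∈ S ↔ (B yy).Nonempty := by
      intro yy; rw [hS]; simp
    set aE := p e i i with haE
    set dd := p i (σ i) d₀ with hdd
    set q := p i (σ i) e with hq'
    -- block sizes are constant
    have ha : ∀ yy : Γ, (B yy).Nonempty → (B yy).card = aE + 1 := by
      intro yy ⟨w₀, hw₀⟩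
      have hw₀i : c w₀ yy = i := (hBmem w₀ yy).1 hw₀
      have h1 := hp e i w₀ yy
      rw [hw₀i] at h1
      have hset : {z' : Γ | c w₀ z' = e ∧ c z' yy = i} = ↑((B yy).erase w₀) := by
        ext a
        simp only [Set.mem_setOf_eq, Finset.coe_erase, Set.mem_diff, Finset.mem_coe,
          hBmem, Set.mem_singleton_iff]
        constructor
        · rintro ⟨h1', h2'⟩; exact ⟨h2', fun h => (he_ne w₀ a h1') h.symm⟩
        · rintro ⟨h2', h1'⟩
          exact ⟨he w₀ (hi_src w₀ yy hw₀i) a (hi_src a yy h2') (fun h => h1' h.symm), h2'⟩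
      rw [hset, Set.ncard_coe_finset] at h1
      have := Finset.card_erase_add_one hw₀
      omega
    -- degrees are constant on C
    have hd : ∀ w : Γ, w ∈ C → (Dg w).card = dd := by
      intro w hw
      have h1 := hp i (σ i) w w
      rw [(hmem w).1 hw] at h1
      have hset : {z' : Γ | c w z' = i ∧ c z' w = σ i} = ↑(Dg w) := by
        ext a
        simp only [Set.mem_setOf_eq, Finset.mem_coe, hDgmem]
        constructor
        · exact fun h => h.1
        · exact fun h => ⟨h, by rw [hσ w a, h]⟩
      rw [hset, Set.ncard_coe_finset] at h1
      exact h1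
    -- pair counts are constant
    have hqc : ∀ w w' : Γ, w ∈ C → w' ∈ C → w ≠ w' →
        (Finset.univ.filter (fun yy : Γ => c w yy = i ∧ c w' yy = i)).card = q := by
      intro w w' hw hw' hne'
      have h1 := hp i (σ i) w w'
      rw [he w hw w' hw' hne'] at h1
      have hset : {z' : Γ | c w z' = i ∧ c z' w' = σ i} =
          ↑(Finset.univ.filter (fun yy : Γ => c w yy = i ∧ c w' yy = i)) := by
        ext a
        simp only [Set.mem_setOf_eq, Finset.coe_filter, Finset.mem_univ, true_and,
          Set.mem_setOf_eq]
        constructor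
        · rintro ⟨ha1, ha2⟩
          refine ⟨ha1, ?_⟩
          rw [hσ a w', ha2, hσσi]
        · rintro ⟨ha1, ha2⟩
          exact ⟨ha1, by rw [hσ w' a, ha2]⟩
      rw [hset, Set.ncard_coe_finset] at h1
      exact h1
    -- basic memberships
    have hu_CF : u ∈ CF := (hCFmem u).2 huC
    have hv_CF : v ∈ CF := (hCFmem v).2 hvC
    have huB : u ∈ B z := (hBmem u z).2 rfl
    have hzS : z ∈ S := (hSmem z).2 ⟨u, huB⟩
    have haz : (B z).card = aE + 1 := ha z ⟨u, huB⟩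
    have hBsub : ∀ yy : Γ, B yy ⊆ CF := fun yy a haB =>
      (hCFmem a).2 (hi_src a yy ((hBmem a yy).1 haB))
    have hvB : v ∉ B z := fun h => hne ((hBmem v z).1 h).symm
    have hlt : aE + 1 < CF.card := by
      rw [← haz]
      exact Finset.card_lt_card ⟨hBsub z, fun hsub => hvB (hsub hv_CF)⟩
    have hd1 : 1 ≤ dd := by
      rw [← hd u huC]
      exact Finset.card_pos.2 ⟨z, (hDgmem u z).2 rfl⟩
    -- S is disjoint from CF
    have hS_out : ∀ yy ∈ S, yy ∉ CF := by
      intro yy hyy hyCF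
      obtain ⟨w, hw⟩ := (hSmem yy).1 hyy
      exact hi_tgt w yy ((hBmem w yy).1 hw) ((hCFmem yy).1 hyCF)
    have hts : S.card + CF.card ≤ Fintype.card Γ := by
      rw [← Finset.card_union_of_disjoint (Finset.disjoint_left.2 hS_out)]
      exact le_trans (Finset.card_le_univ _) (le_of_eq (Finset.card_univ))
    have hCs : C.ncard = CF.card := by
      rw [← Set.ncard_coe_finset]
      congr 1
      ext a; simp [hCFmem]
    have htltS : S.card < CF.card := by
      rw [hCs] at hlarge; omega
    -- generic double counting
    have swap_count : ∀ (A A' : Finset Γ) (P : Γ → Γ → Prop) (_ : ∀ a b, Decidable (P a b)),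
        ∑ w ∈ A, (A'.filter (fun yy => P w yy)).card
          = ∑ yy ∈ A', (A.filter (fun w => P w yy)).card := by
      intro A A' P _
      simp_rw [Finset.card_filter]
      exact Finset.sum_comm
    -- edge count : CF.card * dd = S.card * (aE + 1)
    have h5 : CF.card * dd = S.card * (aE + 1) := by
      have h51 := swap_count CF Finset.univ (fun w yy => c w yy = i) (fun _ _ => inferInstance)
      have hL : ∑ w ∈ CF, (Finset.univ.filter (fun yy => c w yy = i)).card = CF.card * dd := by
        rw [Finset.sum_congr rfl (fun w hw => hd w ((hCFmem w).1 hw))]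
        rw [Finset.sum_const, smul_eq_mul]
      have hR : ∑ yy ∈ Finset.univ, (CF.filter (fun w => c w yy = i)).card
          = S.card * (aE + 1) := by
        have hfe : ∀ yy : Γ, CF.filter (fun w => c w yy = i) = B yy := by
          intro yy
          ext a
          simp only [Finset.mem_filter, hBmem]
          exact ⟨fun h => h.2, fun h => ⟨(hCFmem a).2 (hi_src a yy h), h⟩⟩
        simp_rw [hfe]
        have hvan : ∀ yy ∈ Finset.univ, yy ∉ S → (B yy).card = 0 := by
          intro yy _ hyy
          rw [Finset.card_eq_zero, ← Finset.not_nonempty_iff_eq_empty]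
          exact fun h => hyy ((hSmem yy).2 h)
        rw [← Finset.sum_subset (Finset.subset_univ S) hvan]
        rw [Finset.sum_congr rfl (fun yy hyy => ha yy ((hSmem yy).1 hyy))]
        rw [Finset.sum_const, smul_eq_mul]
      rw [← hL, h51, hR]
    -- pair count
    have hsE : (CF.erase u).card + 1 = CF.card := Finset.card_erase_add_one hu_CF
    have h6 : (CF.erase u).card * q = dd * aE := by
      have h61 := swap_count (CF.erase u) Finset.univ
        (fun w' yy => c u yy = i ∧ c w' yy = i) (fun _ _ => inferInstance)
      have hL : ∑ w' ∈ CF.erase u,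
          (Finset.univ.filter (fun yy => c u yy = i ∧ c w' yy = i)).card
          = (CF.erase u).card * q := by
        have hconst : ∀ w' ∈ CF.erase u,
            (Finset.univ.filter (fun yy => c u yy = i ∧ c w' yy = i)).card = q := by
          intro w' hw'
          have hw'1 := Finset.mem_erase.1 hw'
          exact hqc u w' huC ((hCFmem w').1 hw'1.2) (Ne.symm hw'1.1)
        rw [Finset.sum_congr rfl hconst, Finset.sum_const, smul_eq_mul]
      have hR : ∑ yy ∈ Finset.univ,
          ((CF.erase u).filter (fun w' => c u yy = i ∧ c w' yy = i)).card = dd * aE := by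
        have hfe : ∀ yy : Γ, ((CF.erase u).filter (fun w' => c u yy = i ∧ c w' yy = i)).card
            = if c u yy = i then aE else 0 := by
          intro yy
          split_ifs with hc
          · have heq : (CF.erase u).filter (fun w' => c u yy = i ∧ c w' yy = i)
                = (B yy).erase u := by
              ext a
              simp only [Finset.mem_filter, Finset.mem_erase, hBmem]
              constructor
              · rintro ⟨⟨hau, _⟩, _, hai⟩; exact ⟨hau, hai⟩
              · rintro ⟨hau, hai⟩
                exact ⟨⟨hau, (hCFmem a).2 (hi_src a yy hai)⟩, hc, hai⟩
            rw [heq]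
            have huB' : u ∈ B yy := (hBmem u yy).2 hc
            have h1 := Finset.card_erase_add_one huB'
            have h2 := ha yy ⟨u, huB'⟩
            omega
          · rw [Finset.card_eq_zero, Finset.filter_eq_empty_iff]
            rintro a _ ⟨hcu, _⟩
            exact hc hcu
        simp_rw [hfe]
        rw [← Finset.sum_filter]
        have hDgu : Finset.univ.filter (fun yy => c u yy = i) = Dg u := by
          ext a; simp [hDgmem]
        rw [hDgu, Finset.sum_const, smul_eq_mul, hd u huC]
      rw [← hL, h61, hR]
    -- block intersection counts
    set X : Γ → ℕ := fun yy => ((B z).filter (fun w => c w yy = i)).card with hX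
    have hXz : X z = aE + 1 := by
      show ((B z).filter (fun w => c w z = i)).card = aE + 1
      rw [Finset.filter_true_of_mem (fun w hw => (hBmem w z).1 hw)]
      exact haz
    have hT1 : ∑ yy ∈ S, X yy = (aE + 1) * dd := by
      have h71 := swap_count (B z) Finset.univ (fun w yy => c w yy = i)
        (fun _ _ => inferInstance)
      have hL : ∑ w ∈ B z, (Finset.univ.filter (fun yy => c w yy = i)).card
          = (aE + 1) * dd := by
        have hconst : ∀ w ∈ B z, (Finset.univ.filter (fun yy => c w yy = i)).card = dd := by
          intro w hw
          have hDgw : Finset.univ.filter (fun yy => c w yy = i) = Dg w := by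
            ext a; simp [hDgmem]
          rw [hDgw]
          exact hd w (hi_src w z ((hBmem w z).1 hw))
        rw [Finset.sum_congr rfl hconst, Finset.sum_const, smul_eq_mul, haz]
      have hvan : ∀ yy ∈ Finset.univ, yy ∉ S →
          ((B z).filter (fun w => c w yy = i)).card = 0 := by
        intro yy _ hyy
        rw [Finset.card_eq_zero, Finset.filter_eq_empty_iff]
        intro w _
        exact fun hwi => hyy ((hSmem yy).2 ⟨w, (hBmem w yy).2 hwi⟩)
      have hR := Finset.sum_subset (Finset.subset_univ S) hvan
      rw [← hL, h71, ← hR]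
    have hT2 : ∑ yy ∈ S, (X yy) ^ 2 = (aE + 1) * (dd + aE * q) := by
      have hXsum : ∀ yy : Γ, X yy = ∑ w ∈ B z, (if c w yy = i then 1 else 0) := by
        intro yy; exact Finset.card_filter _ _
      have step1 : ∀ yy : Γ, (X yy) ^ 2 = ∑ w ∈ B z, ∑ w' ∈ B z,
          (if c w yy = i ∧ c w' yy = i then 1 else 0) := by
        intro yy
        rw [sq, hXsum yy, Finset.sum_mul_sum]
        refine Finset.sum_congr rfl fun w _ => Finset.sum_congr rfl fun w' _ => ?_
        by_cases h1 : c w yy = i <;> by_cases h2 : c w' yy = i <;> simp [h1, h2]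
      simp_rw [step1]
      rw [Finset.sum_comm]
      have step2 : ∀ w ∈ B z, ∑ yy ∈ S, ∑ w' ∈ B z,
          (if c w yy = i ∧ c w' yy = i then (1:ℕ) else 0) = dd + aE * q := by
        intro w hw
        rw [Finset.sum_comm]
        have hwC : w ∈ C := hi_src w z ((hBmem w z).1 hw)
        have inner : ∀ w' ∈ B z, ∑ yy ∈ S, (if c w yy = i ∧ c w' yy = i then (1:ℕ) else 0)
            = (Finset.univ.filter (fun yy => c w yy = i ∧ c w' yy = i)).card := by
          intro w' _
          rw [Finset.card_filter]
          refine Finset.sum_subset (Finset.subset_univ S) (fun yy _ hyy => ?_)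
          split_ifs with hcc
          · exact absurd ((hSmem yy).2 ⟨w, (hBmem w yy).2 hcc.1⟩) hyy
          · rfl
        rw [Finset.sum_congr rfl inner]
        have split : ∀ w' ∈ B z,
            (Finset.univ.filter (fun yy => c w yy = i ∧ c w' yy = i)).card
            = if w' = w then dd else q := by
          intro w' hw'
          split_ifs with hww
          · subst hww
            have hDgw : Finset.univ.filter (fun yy => c w' yy = i ∧ c w' yy = i) = Dg w' := by
              ext a; simp [hDgmem]
            rw [hDgw]
            exact hd w' hwC
          · exact hqc w w' hwC (hi_src w' z ((hBmem w' z).1 hw')) (Ne.symm hww)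
        rw [Finset.sum_congr rfl split]
        rw [← Finset.add_sum_erase (B z) _ hw]
        have hrest : ∀ w' ∈ (B z).erase w, (if w' = w then dd else q) = q :=
          fun w' hw' => if_neg (Finset.mem_erase.1 hw').1
        rw [Finset.sum_congr rfl hrest, Finset.sum_const, smul_eq_mul, if_pos rfl]
        have hce := Finset.card_erase_add_one hw
        have hcee : ((B z).erase w).card = aE := by omega
        rw [hcee]
      rw [Finset.sum_congr rfl step2, Finset.sum_const, smul_eq_mul, haz]
    -- Cauchy-Schwarz over S minus z
    set R : Finset Γ := S.erase z with hR
    have hRc : R.card + 1 = S.card := Finset.card_erase_add_one hzS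
    have hcs : (∑ yy ∈ R, X yy) ^ 2 ≤ R.card * ∑ yy ∈ R, (X yy) ^ 2 :=
      sq_sum_le_card_mul_sum_sq
    have hsplit1 : X z + ∑ yy ∈ R, X yy = ∑ yy ∈ S, X yy :=
      Finset.add_sum_erase S X hzS
    have hsplit2 : (X z) ^ 2 + ∑ yy ∈ R, (X yy) ^ 2 = ∑ yy ∈ S, (X yy) ^ 2 :=
      Finset.add_sum_erase S (fun yy => (X yy) ^ 2) hzS
    have N1 : (∑ yy ∈ R, X yy) + (aE + 1) = (aE + 1) * dd := by
      rw [← hT1, ← hsplit1, hXz, Nat.add_comm]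
    have N2 : (∑ yy ∈ R, (X yy) ^ 2) + (aE + 1) * (aE + 1) = (aE + 1) * (dd + aE * q) := by
      rw [← hT2, ← hsplit2, hXz]
      ring
    -- cast everything to ℤ and apply the arithmetic lemma
    have c1 : ((CF.card : ℤ)) * (dd : ℤ) = (S.card : ℤ) * ((aE : ℤ) + 1) := by
      exact_mod_cast h5
    have hsE' : (((CF.erase u).card : ℤ)) + 1 = (CF.card : ℤ) := by exact_mod_cast hsE
    have h6' : (((CF.erase u).card : ℤ)) * (q : ℤ) = (dd : ℤ) * (aE : ℤ) := by
      exact_mod_cast h6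
    have c2 : ((CF.card : ℤ) - 1) * (q : ℤ) = (dd : ℤ) * (((aE : ℤ) + 1) - 1) := by
      rw [← hsE']
      ring_nf
      linear_combination h6'
    have c3 : ((∑ yy ∈ R, X yy : ℕ) : ℤ) + ((aE : ℤ) + 1) = ((aE : ℤ) + 1) * (dd : ℤ) := by
      exact_mod_cast N1
    have c4 : ((∑ yy ∈ R, (X yy) ^ 2 : ℕ) : ℤ) + ((aE : ℤ) + 1) * ((aE : ℤ) + 1)
        = ((aE : ℤ) + 1) * ((dd : ℤ) + (((aE : ℤ) + 1) - 1) * (q : ℤ)) := by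
      have N2' : ((∑ yy ∈ R, (X yy) ^ 2 : ℕ) : ℤ) + ((aE : ℤ) + 1) * ((aE : ℤ) + 1)
          = ((aE : ℤ) + 1) * ((dd : ℤ) + (aE : ℤ) * (q : ℤ)) := by exact_mod_cast N2
      linear_combination N2'
    have hRc' : ((R.card : ℕ) : ℤ) = (S.card : ℤ) - 1 := by
      have : ((R.card : ℕ) : ℤ) + 1 = (S.card : ℤ) := by exact_mod_cast hRc
      linarith
    have c5 : ((∑ yy ∈ R, X yy : ℕ) : ℤ) ^ 2
        ≤ ((S.card : ℤ) - 1) * ((∑ yy ∈ R, (X yy) ^ 2 : ℕ) : ℤ) := by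
      rw [← hRc']
      exact_mod_cast hcs
    exact arith ((aE : ℤ) + 1) (dd : ℤ) (q : ℤ) (CF.card : ℤ) (S.card : ℤ)
      ((∑ yy ∈ R, X yy : ℕ) : ℤ) ((∑ yy ∈ R, (X yy) ^ 2 : ℕ) : ℤ)
      (by omega) (by exact_mod_cast hd1) (by positivity)
      (by exact_mod_cast hlt) (by exact_mod_cast htltS)
      c1 c2 c3 c4 c5
  -- reduction to the main lemma
  have L1 : ∀ w : Γ, w ≠ γ₁ → w ≠ γ₂ → c γ₁ w = c γ₂ w := by
    intro w h1 h2
    by_cases hwC : w ∈ C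
    · rw [he γ₁ hγ₁ w hwC (Ne.symm h1), he γ₂ hγ₂ w hwC (Ne.symm h2)]
    · exact M γ₁ γ₂ w hγ₁ hγ₂ hwC
  have L2 : ∀ w : Γ, w ≠ γ₁ → w ≠ γ₂ → c w γ₁ = c w γ₂ := by
    intro w h1 h2
    rw [hσ γ₁ w, hσ γ₂ w, L1 w h1 h2]
  have L3 : c γ₂ γ₁ = c γ₁ γ₂ := by
    rw [hee, he γ₂ hγ₂ γ₁ hγ₁ (Ne.symm h12)]
  have L4 : c γ₂ γ₂ = c γ₁ γ₁ := by rw [hγ₁₁, hγ₂₂]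
  by_cases hx1 : x = γ₁
  · rw [hx1, Equiv.swap_apply_left]
    by_cases hy1 : y = γ₁
    · rw [hy1, Equiv.swap_apply_left]; exact L4
    by_cases hy2 : y = γ₂
    · rw [hy2, Equiv.swap_apply_right]; exact L3
    · rw [Equiv.swap_apply_of_ne_of_ne hy1 hy2]; exact (L1 y hy1 hy2).symm
  by_cases hx2 : x = γ₂
  · rw [hx2, Equiv.swap_apply_right]
    by_cases hy1 : y = γ₁
    · rw [hy1, Equiv.swap_apply_left]; exact L3.symm
    by_cases hy2 : y = γ₂
    · rw [hy2, Equiv.swap_apply_right]; exact L4.symm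
    · rw [Equiv.swap_apply_of_ne_of_ne hy1 hy2]; exact L1 y hy1 hy2
  · rw [Equiv.swap_apply_of_ne_of_ne hx1 hx2]
    by_cases hy1 : y = γ₁
    · rw [hy1, Equiv.swap_apply_left]; exact (L2 x hx1 hx2).symm
    by_cases hy2 : y = γ₂
    · rw [hy2, Equiv.swap_apply_right]; exact L2 x hx1 hx2
    · rw [Equiv.swap_apply_of_ne_of_ne hy1 hy2]
end

section
/- Let G ≤ Sym(Ω) be transitive and φ : G → Alt_k an epimorphism with k ≥ 5. Let N = ker(φ), and let Δ = Ω be an orbit of G containing an 'atteint' (affected) point, i.e., a point x with φ(G_x) ≠ Alt_k. Then every orbit of N contained in Δ has length at most |Δ|/k. -/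
/-!
Since `N = ker φ` is normal, the `N`-orbit of `x` is also its `(N ⊔ G_x)`-orbit, and `φ` identifies
the cosets of `N ⊔ G_x` with those of `φ(G_x)`; hence `|x^N| · [Alt_k : φ(G_x)] = |Ω|`. This index
is the same at every point, stabilizers being conjugate. At an affected point it is at least `k`:
`Alt_k` is simple, so it acts faithfully on the `m` cosets of a proper subgroup, whence `k!/2 ≤ m!`.
-/

open MulAction Subgroup
open scoped Pointwise

theorem Subgroup.card_le_factorial_index_of_isSimpleGroup {G : Type*} [Group G] [Finite G]
    [IsSimpleGroup G] {H : Subgroup G} (hH : H ≠ ⊤) : Nat.card G ≤ H.index.factorial := by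
  have hcore : H.normalCore = ⊥ :=
    (IsSimpleGroup.eq_bot_or_eq_top_of_normal _ H.normalCore_normal).resolve_right
      fun h ↦ hH (top_le_iff.mp (h ▸ H.normalCore_le))
  have hinj : Function.Injective (toPermHom G (G ⧸ H)) := by
    rw [← MonoidHom.ker_eq_bot_iff, ← normalCore_eq_ker, hcore]
  rw [index_eq_card, ← Nat.card_perm]
  exact Nat.card_le_card_of_injective _ hinj

theorem alternatingGroup.card_le_index_of_ne_top {α : Type*} [Fintype α] [DecidableEq α]
    (hα : 5 ≤ Nat.card α) {H : Subgroup (alternatingGroup α)} (hH : H ≠ ⊤) :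
    Nat.card α ≤ H.index := by
  have := alternatingGroup.isSimpleGroup hα
  have : Nontrivial α := Finite.one_lt_card_iff_nontrivial.mp (by omega)
  by_contra! hlt
  have hcard : (Nat.card α).factorial ≤ 2 * (Nat.card α - 1).factorial := calc
    (Nat.card α).factorial = 2 * Nat.card (alternatingGroup α) := by
      rw [two_mul_nat_card_alternatingGroup, Nat.card_perm]
    _ ≤ 2 * H.index.factorial := by gcongr; exact H.card_le_factorial_index_of_isSimpleGroup hH
    _ ≤ 2 * (Nat.card α - 1).factorial := by gcongr; omega
  rw [← Nat.mul_factorial_pred (by omega)] at hcard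
  have := Nat.le_of_mul_le_mul_right hcard (Nat.factorial_pos _)
  omega

theorem MulAction.stabilizer_subgroup_eq_subgroupOf {G X : Type*} [Group G] [MulAction G X]
    (K : Subgroup G) (x : X) : stabilizer K x = (stabilizer G x).subgroupOf K := by
  ext
  simp [mem_subgroupOf, Subgroup.smul_def]

theorem MulAction.orbit_sup_stabilizer {G X : Type*} [Group G] [MulAction G X]
    (N : Subgroup G) [N.Normal] (x : X) : orbit ↥(N ⊔ stabilizer G x) x = orbit N x := by
  refine le_antisymm ?_ fun _ ⟨⟨g, hg⟩, h⟩ ↦ ⟨⟨g, mem_sup_left hg⟩, h⟩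
  rintro _ ⟨⟨g, hg⟩, rfl⟩
  obtain ⟨n, hn, s, hs, rfl⟩ : g ∈ (N : Set G) * (stabilizer G x : Set G) := by
    rw [← normal_mul]; exact hg
  exact ⟨⟨n, hn⟩, by simp [Subgroup.smul_def, mul_smul, mem_stabilizer_iff.mp hs]⟩

theorem MulAction.card_orbit_normal_mul_index_sup {G X : Type*} [Group G] [MulAction G X]
    [IsPretransitive G X] (N : Subgroup G) [N.Normal] (x : X) :
    Nat.card (orbit N x) * (N ⊔ stabilizer G x).index = Nat.card X := by
  rw [← orbit_sup_stabilizer, Nat.card_coe_set_eq, ← index_stabilizer,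
    stabilizer_subgroup_eq_subgroupOf, ← relIndex, relIndex_mul_index le_sup_right,
    index_stabilizer_of_transitive]

theorem MulAction.card_orbit_ker_mul_index_map_stabilizer {G H X : Type*} [Group G] [Group H]
    [MulAction G X] [IsPretransitive G X] {φ : G →* H} (hφ : Function.Surjective φ) (x : X) :
    Nat.card (orbit φ.ker x) * ((stabilizer G x).map φ).index = Nat.card X := by
  rw [index_map, φ.range_eq_top_of_surjective hφ, index_top, mul_one, sup_comm,
    card_orbit_normal_mul_index_sup]

theorem MulAction.index_map_stabilizer_smul {G H X : Type*} [Group G] [Group H] [MulAction G X]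
    (φ : G →* H) (g : G) (x : X) :
    ((stabilizer G (g • x)).map φ).index = ((stabilizer G x).map φ).index := by
  have hconj : φ.comp (MulAut.conj g).toMonoidHom = (MulAut.conj (φ g)).toMonoidHom.comp φ := by
    ext; simp
  rw [stabilizer_smul_eq_stabilizer_map_conj, map_map, hconj, ← map_map]
  exact index_map_of_bijective (MulAut.conj (φ g)).bijective _

theorem affected_orbit_small_general {Ω G : Type*} [Group G] [MulAction G Ω]
    [MulAction.IsPretransitive G Ω] {k : ℕ} (hk : 5 ≤ k)
    (φ : G →* alternatingGroup (Fin k)) (hφ : Function.Surjective φ)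
    (haffected : ∃ x : Ω, (MulAction.stabilizer G x).map φ ≠ ⊤) :
    ∀ y : Ω, k * Nat.card (MulAction.orbit (↥φ.ker) y) ≤ Nat.card Ω := by
  intro y
  obtain ⟨x, hx⟩ := haffected
  obtain ⟨g, rfl⟩ := exists_smul_eq G x y
  have hindex : k ≤ ((stabilizer G x).map φ).index := by
    simpa using alternatingGroup.card_le_index_of_ne_top (by simpa) hx
  calc k * Nat.card (orbit φ.ker (g • x))
      ≤ ((stabilizer G x).map φ).index * Nat.card (orbit φ.ker (g • x)) := by gcongr
    _ = Nat.card Ω := by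
      rw [← index_map_stabilizer_smul φ g, mul_comm, card_orbit_ker_mul_index_map_stabilizer hφ]

/-- Let `G` act transitively on `Ω` and `φ : G → Alt_k` be an epimorphism, `k ≥ 5`.
If some point of `Ω` is affected (i.e. `φ(G_x) ≠ Alt_k`), then every orbit of
`N = ker φ` has length at most `|Ω|/k`. -/
theorem affected_orbit_small {Ω G : Type*} [Finite Ω] [Group G] [MulAction G Ω]
    [MulAction.IsPretransitive G Ω] {k : ℕ} (hk : 5 ≤ k)
    (φ : G →* alternatingGroup (Fin k)) (hφ : Function.Surjective φ)
    (haffected : ∃ x : Ω, (MulAction.stabilizer G x).map φ ≠ ⊤) :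
    ∀ y : Ω, k * Nat.card (MulAction.orbit (↥φ.ker) y) ≤ Nat.card Ω :=
  affected_orbit_small_general hk φ hφ haffected
end

section
/- Let K ≤ K₁ × ⋯ × K_s be a subgroup of a direct product of groups, and let φ : K → S be a surjective homomorphism onto a nonabelian simple group S. Then there exists an index i such that φ factors through the i-th projection: there is an epimorphism ψ : πᵢ(K) → S with φ = ψ ∘ πᵢ restricted to K, where πᵢ is the projection K → Kᵢ. -/
/-!
A nonabelian simple group `S` is perfect, so if two normal subgroups of `K` both map onto `S`
under `φ`, then so does their commutator, which lies in their intersection. If no coordinate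
kernel `Nᵢ = ker πᵢ ∩ K` were contained in `ker φ`, each `Nᵢ` would map onto `S` by simplicity,
hence so would `⋂ᵢ Nᵢ = 1`, which is absurd. So some `Nᵢ ≤ ker φ`, and `φ` factors through
`πᵢ : K ↠ πᵢ(K)`.
-/

theorem commutator_eq_top_of_isSimpleGroup {S : Type*} [Group S] [IsSimpleGroup S]
    (hS : ∃ a b : S, a * b ≠ b * a) : commutator S = ⊤ := by
  refine (Subgroup.commutator_normal (⊤ : Subgroup S) ⊤).eq_bot_or_eq_top.resolve_left fun h => ?_
  obtain ⟨a, b, hab⟩ := hS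
  have := Subgroup.commutator_mem_commutator (Subgroup.mem_top a) (Subgroup.mem_top b)
  rw [h, Subgroup.mem_bot, commutatorElement_eq_one_iff_mul_comm] at this
  exact hab this

namespace Subgroup

variable {G S : Type*} [Group G] [Group S]

theorem map_eq_top_of_not_le_ker [IsSimpleGroup S] {φ : G →* S}
    (hφ : Function.Surjective φ) {N : Subgroup G} (hN : N.Normal) (h : ¬N ≤ φ.ker) :
    N.map φ = ⊤ :=
  (hN.map φ hφ).eq_bot_or_eq_top.resolve_left (mt (map_eq_bot_iff N).mp h)

theorem map_inf_eq_top_of_commutator_eq_top (hS : _root_.commutator S = ⊤) (φ : G →* S)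
    {N M : Subgroup G} [N.Normal] [M.Normal] (hN : N.map φ = ⊤) (hM : M.map φ = ⊤) :
    (N ⊓ M).map φ = ⊤ := by
  refine top_le_iff.mp ?_
  calc ⊤ = ⁅N.map φ, M.map φ⁆ := by rw [hN, hM]; exact hS.symm
    _ = ⁅N, M⁆.map φ := (map_commutator N M φ).symm
    _ ≤ (N ⊓ M).map φ :=
      map_mono (le_inf (commutator_le_left N M) (commutator_le_right N M))

theorem exists_le_ker_of_iInf_eq_bot [IsSimpleGroup S] (hS : _root_.commutator S = ⊤)
    {φ : G →* S} (hφ : Function.Surjective φ) {ι : Type*} [Finite ι] (N : ι → Subgroup G)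
    (hN : ∀ i, (N i).Normal) (hbot : ⨅ i, N i = ⊥) : ∃ i, N i ≤ φ.ker := by
  have := Fintype.ofFinite ι
  by_contra! hle
  have hinf : (Finset.univ.inf N).Normal ∧ (Finset.univ.inf N).map φ = ⊤ := by
    refine Finset.inf_induction (p := fun A : Subgroup G => A.Normal ∧ A.map φ = ⊤)
      ⟨normal_top, ?_⟩
      (fun A ⟨_, hA⟩ B ⟨_, hB⟩ => ⟨inferInstance, map_inf_eq_top_of_commutator_eq_top hS φ hA hB⟩)
      fun i _ => ⟨hN i, map_eq_top_of_not_le_ker hφ (hN i) (hle i)⟩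
    rw [← MonoidHom.range_eq_map, MonoidHom.range_eq_top_of_surjective φ hφ]
  rw [Finset.inf_univ_eq_iInf, hbot, map_bot] at hinf
  exact bot_ne_top hinf.2

theorem iInf_ker_subgroupMap_eval_eq_bot {ι : Type*} {κ : ι → Type*} [∀ i, Group (κ i)]
    (K : Subgroup (∀ i, κ i)) : ⨅ i, ((Pi.evalMonoidHom κ i).subgroupMap K).ker = ⊥ :=
  eq_bot_iff.mpr fun _ hx =>
    mem_bot.mpr (Subtype.ext (funext fun i => congrArg Subtype.val (mem_iInf.mp hx i)))

end Subgroup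

/-- If `K ≤ K₁ × ⋯ × K_s` and `φ : K → S` is a surjective homomorphism onto a nonabelian
simple group `S`, then `φ` factors through some coordinate projection `πᵢ`: there is an
epimorphism `ψ : πᵢ(K) → S` with `φ = ψ ∘ πᵢ` on `K`. -/
theorem factor_through_projection {s : ℕ} (κ : Fin s → Type*) [∀ i, Group (κ i)]
    (K : Subgroup (∀ i, κ i)) (S : Type*) [Group S] [IsSimpleGroup S]
    (hnonabelian : ∃ a b : S, a * b ≠ b * a)
    (φ : ↥K →* S) (hφ : Function.Surjective φ) :
    ∃ i : Fin s, ∃ ψ : ↥(K.map (Pi.evalMonoidHom κ i)) →* S,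
      Function.Surjective ψ ∧
      ∀ x : ↥K, φ x = ψ ⟨Pi.evalMonoidHom κ i (x : ∀ j, κ j),
        Subgroup.mem_map_of_mem _ x.2⟩ := by
  obtain ⟨i, hi⟩ := Subgroup.exists_le_ker_of_iInf_eq_bot
    (commutator_eq_top_of_isSimpleGroup hnonabelian) hφ _
    (fun i => MonoidHom.normal_ker _) (Subgroup.iInf_ker_subgroupMap_eval_eq_bot K)
  set π := (Pi.evalMonoidHom κ i).subgroupMap K
  set ψ := π.liftOfSurjective ((Pi.evalMonoidHom κ i).subgroupMap_surjective K) ⟨φ, hi⟩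
  have hψ : ∀ x, ψ (π x) = φ x := π.liftOfRightInverse_comp_apply _ _ ⟨φ, hi⟩
  refine ⟨i, ψ, fun z => ?_, fun x => (hψ x).symm⟩
  obtain ⟨x, rfl⟩ := hφ z
  exact ⟨π x, hψ x⟩
end
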